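/- For nonnegative reals a_j (j = 0,…,N), b > 0, ρ_j ≥ 0, σ² > 0 and χ > -1, the fractional-programming identity holds: max over χ > -1 of [ln(1+χ) - χ + (1+χ)·S/(S+1)] = ln(1+S), where S = ρ_i b²/(Σ_j ρ_j a_j² + σ²), attained at χ = S. -/
import Mathlib


theorem fractional_programming_max {N : ℕ} (a ρ : Fin (N + 1) → ℝ) (i : Fin (N + 1))
    (b σ2 : ℝ) (ha : ∀ j, 0 ≤ a j) (hρ : ∀ j, 0 ≤ ρ j) (hb : 0 < b) (hσ : 0 < σ2) :
    let S := ρ i * b ^ 2 / (∑ j, ρ j * (a j) ^ 2 + σ2)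
    IsGreatest
      ((fun χ => Real.log (1 + χ) - χ + (1 + χ) * S / (S + 1)) '' Set.Ioi (-1 : ℝ))
      (Real.log (1 + S)) ∧
    Real.log (1 + S) - S + (1 + S) * S / (S + 1) = Real.log (1 + S) := by
  intro S
  have hden : 0 < ∑ j, ρ j * (a j) ^ 2 + σ2 := by
    have : 0 ≤ ∑ j, ρ j * (a j) ^ 2 :=
      Finset.sum_nonneg fun j _ => mul_nonneg (hρ j) (sq_nonneg _)
    linarith
  have hS : 0 ≤ S := div_nonneg (mul_nonneg (hρ i) (sq_nonneg b)) hden.le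
  have hS1 : (0 : ℝ) < S + 1 := by linarith
  have hfix : (1 + S) * S / (S + 1) = S := by
    field_simp
    ring
  refine ⟨⟨⟨S, by simpa using by linarith, by simp only [hfix]; ring⟩, ?_⟩, by rw [hfix]; ring⟩
  rintro y ⟨χ, hχ, rfl⟩
  have hχ1 : (0 : ℝ) < 1 + χ := by
    have := Set.mem_Ioi.mp hχ; linarith
  have hlog : Real.log (1 + χ) - Real.log (1 + S) ≤ (χ - S) / (S + 1) := by
    rw [← Real.log_div (ne_of_gt hχ1) (by linarith)]
    have h := Real.log_le_sub_one_of_pos (div_pos hχ1 (by linarith : (0:ℝ) < 1 + S))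
    have : (1 + χ) / (1 + S) - 1 = (χ - S) / (S + 1) := by
      rw [div_sub_one (by linarith : (1 : ℝ) + S ≠ 0)]
      ring
    linarith
  have heq : χ - (1 + χ) * S / (S + 1) = (χ - S) / (S + 1) := by
    rw [eq_div_iff (ne_of_gt hS1), sub_mul, div_mul_cancel₀ _ (ne_of_gt hS1)]
    ring
  simp only
  linarith
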